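/- Let ω ∈ ℂ be a primitive cube root of unity. There is no point p of the quadric Q = {[x₀:x₁:x₂:x₃:x₄] ∈ ℙ⁴(ℂ) : 2x₂² = x₁x₃ − x₀x₄} with τ(p) = p and σ(p) = p; that is, the group G = ⟨τ, σ⟩ has no fixed point on Q. -/

import Mathlib

noncomputable section

/-- Projective 4-space over ℂ. -/
abbrev P4 := Projectivization ℂ (Fin 5 → ℂ)

/-- The quadric threefold Q = {2x₂² = x₁x₃ − x₀x₄} ⊂ ℙ⁴ (the condition is invariant under
scaling of homogeneous coordinates, so testing it on `p.rep` is well defined). -/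
def quadricQ4 : Set P4 :=
  {p : P4 | 2 * p.rep 2 ^ 2 = p.rep 1 * p.rep 3 - p.rep 0 * p.rep 4}

/-- A diagonal linear automorphism of ℂⁿ. -/
def diagEquiv {n : ℕ} (d : Fin n → ℂ) (hd : ∀ i, d i ≠ 0) : (Fin n → ℂ) ≃ₗ[ℂ] (Fin n → ℂ) :=
  LinearEquiv.piCongrRight fun i => LinearEquiv.smulOfNeZero ℂ ℂ (d i) (hd i)

/-- The linear automorphism of ℂ⁵ inducing τ : [x₀:x₁:x₂:x₃:x₄] ↦ [x₄:x₃:x₂:x₁:x₀]. -/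
def tauEquiv4 : (Fin 5 → ℂ) ≃ₗ[ℂ] (Fin 5 → ℂ) :=
  LinearEquiv.funCongrLeft ℂ ℂ (Equiv.subLeft (4 : Fin 5))

/-- The projective involution τ of ℙ⁴. -/
def tauP4 : P4 → P4 := Projectivization.map tauEquiv4.toLinearMap tauEquiv4.injective

/-- The linear automorphism of ℂ⁵ inducing
σ : [x₀:x₁:x₂:x₃:x₄] ↦ [x₀:ω²x₁:ωx₂:x₃:ω²x₄], for ω ≠ 0. -/
def sigmaEquiv4 (ω : ℂ) (hω : ω ≠ 0) : (Fin 5 → ℂ) ≃ₗ[ℂ] (Fin 5 → ℂ) :=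
  diagEquiv ![1, ω ^ 2, ω, 1, ω ^ 2]
    (by intro i; fin_cases i <;> simp [hω])

/-- The projective automorphism σ of ℙ⁴. -/
def sigmaP4 (ω : ℂ) (hω : ω ≠ 0) : P4 → P4 :=
  Projectivization.map (sigmaEquiv4 ω hω).toLinearMap (sigmaEquiv4 ω hω).injective

/-!
A point fixed by the diagonal map σ is represented by an eigenvector, so its nonzero
coordinates all carry the same σ-weight; the weight spaces are ⟨x₀, x₃⟩ (weight 1),
⟨x₁, x₄⟩ (weight ω²) and ⟨x₂⟩ (weight ω). The reversal τ exchanges the first two, so a point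
fixed by both has only x₂ ≠ 0, and such a point is not on Q.
-/

namespace Projectivization

variable {K V : Type*} [DivisionRing K] [AddCommGroup V] [Module K V]

theorem exists_map_rep_eq_smul_of_map_eq {f : V →ₗ[K] V} (hf : Function.Injective f)
    {p : Projectivization K V} (h : map f hf p = p) : ∃ a : Kˣ, f p.rep = a • p.rep := by
  have hmk : mk K (f p.rep) (map_zero f ▸ hf.ne p.rep_nonzero) = mk K p.rep p.rep_nonzero := by
    rw [← map_mk f hf p.rep p.rep_nonzero, mk_rep]
    exact h
  obtain ⟨a, ha⟩ := (mk_eq_mk_iff K _ _ _ _).1 hmk.symm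
  exact ⟨a⁻¹, eq_inv_smul_iff.2 ha⟩

end Projectivization

theorem diagEquiv_eq_of_apply_eq_smul {n : ℕ} {d : Fin n → ℂ} (hd : ∀ i, d i ≠ 0)
    {v : Fin n → ℂ} {a : ℂ} (h : diagEquiv d hd v = a • v) {i : Fin n} (hi : v i ≠ 0) :
    d i = a :=
  mul_right_cancel₀ hi (congrFun h i)

theorem tauEquiv4_apply (v : Fin 5 → ℂ) (i : Fin 5) : tauEquiv4 v i = v (4 - i) :=
  rfl

theorem ne_zero_rev_of_tauEquiv4_eq_smul {v : Fin 5 → ℂ} {a : ℂ} (ha : a ≠ 0)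
    (h : tauEquiv4 v = a • v) {i : Fin 5} (hi : v i ≠ 0) : v (4 - i) ≠ 0 := by
  rw [← tauEquiv4_apply v i, h]
  exact mul_ne_zero ha hi

theorem sigma_weight_eq_rev_weight_iff {ω : ℂ} (hω : IsPrimitiveRoot ω 3) (i : Fin 5) :
    ![1, ω ^ 2, ω, 1, ω ^ 2] i = ![1, ω ^ 2, ω, 1, ω ^ 2] (4 - i) ↔ i = 2 := by
  have h2 : ω ^ 2 ≠ 1 := hω.pow_ne_one_of_pos_of_lt two_ne_zero (by norm_num)
  fin_cases i <;> simp [h2, h2.symm]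

theorem sigma_weight_eq_omega_iff {ω : ℂ} (hω : IsPrimitiveRoot ω 3) (i : Fin 5) :
    ![1, ω ^ 2, ω, 1, ω ^ 2] i = ω ↔ i = 2 := by
  have h1 : ω ≠ 1 := hω.ne_one (by norm_num)
  have h21 : ω ^ 2 ≠ ω := fun h =>
    absurd (hω.pow_inj (i := 2) (j := 1) (by norm_num) (by norm_num) (by rwa [pow_one])) (by norm_num)
  fin_cases i <;> simp [h1.symm, h21]

/-- for ω a primitive cube root of unity, the group G = ⟨τ, σ⟩ has no fixed
point on the quadric Q = {2x₂² = x₁x₃ − x₀x₄} ⊂ ℙ⁴. -/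
theorem stmt12 (ω : ℂ) (hω : IsPrimitiveRoot ω 3) :
    ¬ ∃ p : P4, p ∈ quadricQ4 ∧ tauP4 p = p ∧
      sigmaP4 ω (hω.ne_zero (by norm_num)) p = p := by
  rintro ⟨p, hQ, hτ, hσ⟩
  obtain ⟨a, ha⟩ := Projectivization.exists_map_rep_eq_smul_of_map_eq _ hτ
  obtain ⟨b, hb⟩ := Projectivization.exists_map_rep_eq_smul_of_map_eq _ hσ
  set v := p.rep
  have weight_eq (i : Fin 5) (hi : v i ≠ 0) : ![1, ω ^ 2, ω, 1, ω ^ 2] i = b :=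
    diagEquiv_eq_of_apply_eq_smul _ hb hi
  have hv2 : v 2 ≠ 0 := by
    intro hv2
    obtain ⟨i, hi⟩ := Function.ne_iff.1 p.rep_nonzero
    have hrev := ne_zero_rev_of_tauEquiv4_eq_smul a.ne_zero ha hi
    have hi2 := (sigma_weight_eq_rev_weight_iff hω i).1
      ((weight_eq i hi).trans (weight_eq _ hrev).symm)
    exact hi (hi2 ▸ hv2)
  have hvi (i : Fin 5) (hi : i ≠ 2) : v i = 0 := by
    by_contra hvi
    exact hi ((sigma_weight_eq_omega_iff hω i).1 ((weight_eq i hvi).trans (weight_eq 2 hv2).symm))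
  have hQ' : 2 * v 2 ^ 2 = v 1 * v 3 - v 0 * v 4 := hQ
  simp [hvi 0 (by decide), hvi 1 (by decide), hvi 3 (by decide), hvi 4 (by decide), hv2] at hQ'
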